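/- arXiv:2504.15828 — 4 statements merged into one kernel-verified Lean document; each statement's English description precedes it below -/
import Mathlib

section
/- Let ψ : B* → A* be an injective morphism, v ∈ A* a primitive word, and z ∈ B* such that ψ(z) is a factor of v^k for some k ≥ 1. If |z| ≥ (ℓ+1)·|v| for some ℓ ≥ 2, then there exists a primitive word u ∈ B* such that u^ℓ is a factor of z and the primitive root of ψ(u) is a conjugate of v. -/
/-- The morphism on words induced by a map on letters. -/
def applyM {A B : Type*} (f : A → List B) (w : List A) : List B := (w.map f).flatten

/-- `wpow u n` is the word `u` repeated `n` times. -/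
def wpow {A : Type*} (u : List A) (n : ℕ) : List A := (List.replicate n u).flatten

/-- A word is primitive if it is nonempty and not a proper power. -/
def Primitive {A : Type*} (w : List A) : Prop := w ≠ [] ∧ ∀ u n, w = wpow u n → n = 1

/-- Conjugacy of words. -/
def Conj {A : Type*} (u v : List A) : Prop := ∃ x y, u = x ++ y ∧ v = y ++ x

/-- The language of a D(F)0L system with (iterated) morphism `g` and axiom set `W`:
all factors of all `g^[n] w`, `w ∈ W`. -/
def LangG {A : Type*} (g : List A → List A) (W : Set (List A)) : Set (List A) :=
  {u | ∃ n : ℕ, ∃ w ∈ W, u <:+: g^[n] w}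

/-- `(s, w, t)` is an interpretation of `u`: `w` is in the language and `g w = s ++ u ++ t`. -/
def Interp {A : Type*} (g : List A → List A) (L : Set (List A)) (s w t u : List A) : Prop :=
  w ∈ L ∧ g w = s ++ u ++ t

/-- The pair `(u₁, u₂)` is compatible with the interpretation `(s, w, t)` of `u₁ ++ u₂`. -/
def Compatible {A : Type*} (g : List A → List A) (s w t u₁ u₂ : List A) : Prop :=
  ∃ w₁ w₂, w = w₁ ++ w₂ ∧ g w₁ = s ++ u₁ ∧ g w₂ = u₂ ++ t

/-- Weakly synchronizing pair: compatible with all interpretations of `u₁ ++ u₂`. -/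
def WeakSync {A : Type*} (g : List A → List A) (L : Set (List A)) (u₁ u₂ : List A) : Prop :=
  ∀ s w t, Interp g L s w t (u₁ ++ u₂) → Compatible g s w t u₁ u₂

/-- Strongly synchronizing pair. -/
def StrongSync {A : Type*} (g : List A → List A) (L : Set (List A)) (u₁ u₂ : List A) : Prop :=
  u₁ ≠ [] ∧ ∃ a : A, ∀ s w t, Interp g L s w t (u₁ ++ u₂) →
    ∃ w₁ w₂, w = w₁ ++ w₂ ∧ g w₁ = s ++ u₁ ∧ g w₂ = u₂ ++ t ∧ w₁.getLast? = some a

/-- A word is weakly synchronized if some factorization of it is weakly synchronizing. -/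
def WeaklySynchronized {A : Type*} (g : List A → List A) (L : Set (List A)) (u : List A) : Prop :=
  ∃ u₁ u₂, u = u₁ ++ u₂ ∧ WeakSync g L u₁ u₂

/-- An admissible pair: compatible with at least one interpretation. -/
def Admissible {A : Type*} (g : List A → List A) (L : Set (List A)) (u₁ u₂ : List A) : Prop :=
  ∃ s w t, Interp g L s w t (u₁ ++ u₂) ∧ Compatible g s w t u₁ u₂

/-- A word is bounded if the lengths of its iterated images stay bounded. -/
def BoundedWord {A : Type*} (f : A → List A) (w : List A) : Prop :=
  ∃ C, ∀ k : ℕ, ((applyM f)^[k] w).length ≤ C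

/-- `Ω(S)`: primitive words all of whose powers belong to the language. -/
def Omega {A : Type*} (f : A → List A) (W : Set (List A)) : Set (List A) :=
  {v | v ∈ LangG (applyM f) W ∧ Primitive v ∧ ∀ k : ℕ, wpow v k ∈ LangG (applyM f) W}

/-- Minimal interpretation: `|s| < |f(first letter of w)|` and `|t| < |f(last letter of w)|`. -/
def MinInterp {A : Type*} (f : A → List A) (L : Set (List A)) (s w t u : List A) : Prop :=
  Interp (applyM f) L s w t u ∧ w ≠ [] ∧
    (∀ a, w.head? = some a → s.length < (f a).length) ∧
    (∀ b, w.getLast? = some b → t.length < (f b).length)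

section Aux
variable {A B : Type*}

lemma wpow_zero (u : List A) : wpow u 0 = [] := rfl

lemma wpow_succ (u : List A) (n : ℕ) : wpow u (n+1) = u ++ wpow u n := by
  simp [wpow, List.replicate_succ]

lemma wpow_one (u : List A) : wpow u 1 = u := by simp [wpow]

lemma wpow_add (u : List A) (m n : ℕ) : wpow u (m+n) = wpow u m ++ wpow u n := by
  induction m with
  | zero => simp [wpow_zero]
  | succ m ih => rw [Nat.succ_add, wpow_succ, wpow_succ, ih, List.append_assoc]

lemma length_wpow (u : List A) (n : ℕ) : (wpow u n).length = n * u.length := by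
  induction n with
  | zero => simp [wpow_zero]
  | succ n ih => rw [wpow_succ, List.length_append, ih, Nat.succ_mul]; omega

lemma wpow_nil (n : ℕ) : wpow ([] : List A) n = [] := by
  have := length_wpow ([] : List A) n
  simp at this
  exact this

lemma wpow_wpow (u : List A) (m n : ℕ) : wpow (wpow u m) n = wpow u (n*m) := by
  induction n with
  | zero => simp [wpow_zero]
  | succ n ih => rw [wpow_succ, ih, Nat.succ_mul, Nat.add_comm, wpow_add]

lemma wpow_shuffle (x y : List A) (n : ℕ) :
    x ++ wpow (y ++ x) n = wpow (x ++ y) n ++ x := by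
  induction n with
  | zero => simp [wpow_zero]
  | succ n ih =>
    rw [wpow_succ, wpow_succ, show x ++ ((y ++ x) ++ wpow (y ++ x) n)
      = (x ++ y) ++ (x ++ wpow (y ++ x) n) by simp, ih]
    simp

lemma wpow_comm_self (x : List A) (n : ℕ) : x ++ wpow x n = wpow x n ++ x := by
  have := wpow_shuffle x [] n
  simpa using this

lemma applyM_append (f : A → List B) (a b : List A) :
    applyM f (a ++ b) = applyM f a ++ applyM f b := by simp [applyM]

lemma applyM_nil (f : A → List B) : applyM f [] = [] := rfl

lemma applyM_wpow (f : A → List B) (u : List A) (n : ℕ) :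
    applyM f (wpow u n) = wpow (applyM f u) n := by
  induction n with
  | zero => rfl
  | succ n ih => rw [wpow_succ, applyM_append, ih, wpow_succ]

lemma eq_of_prefix_of_length {s u w : List A} (h1 : s <+: w) (h2 : u <+: w)
    (h : s.length = u.length) : s = u := by
  rw [List.prefix_iff_eq_take.mp h1, List.prefix_iff_eq_take.mp h2, h]

lemma wpow_prefix (u : List A) {m n : ℕ} (h : m ≤ n) : wpow u m <+: wpow u n :=
  ⟨wpow u (n - m), by rw [← wpow_add]; congr 1; omega⟩

end Aux

section Aux2
variable {A B : Type*}

/-- Commuting words are powers of a common word (fuel version). -/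
lemma comm_common_aux : ∀ (N : ℕ) (x y : List A), x ++ y = y ++ x →
    x.length + y.length ≤ N → ∃ t m n, x = wpow t m ∧ y = wpow t n := by
  intro N
  induction N with
  | zero =>
    intro x y _ hl
    have hx : x = [] := List.eq_nil_of_length_eq_zero (by omega)
    have hy : y = [] := List.eq_nil_of_length_eq_zero (by omega)
    exact ⟨[], 0, 0, by simp [hx, wpow_zero], by simp [hy, wpow_zero]⟩
  | succ N ih =>
    intro x y h hl
    by_cases hx : x = []
    · exact ⟨y, 0, 1, by simp [hx, wpow_zero], by rw [wpow_one]⟩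
    by_cases hy : y = []
    · exact ⟨x, 1, 0, by rw [wpow_one], by simp [hy, wpow_zero]⟩
    rcases le_total x.length y.length with hle | hle
    · have hxy : x <+: y := by
        have h1 : x <+: y ++ x := h ▸ List.prefix_append x y
        exact List.prefix_of_prefix_length_le h1 (List.prefix_append y x) hle
      obtain ⟨y₁, hy₁⟩ := hxy
      have hcomm : x ++ y₁ = y₁ ++ x := by
        have h' : x ++ (x ++ y₁) = (x ++ y₁) ++ x := by rw [hy₁]; exact h
        apply List.append_cancel_left (as := x)
        rw [h']; simp
      have hlen : x.length + y₁.length ≤ N := by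
        have := congrArg List.length hy₁
        simp at this
        have hx1 : 1 ≤ x.length := by
          cases x with
          | nil => exact absurd rfl hx
          | cons a l => simp
        omega
      obtain ⟨t, m, n, htm, htn⟩ := ih x y₁ hcomm hlen
      exact ⟨t, m, m + n, htm, by rw [← hy₁, wpow_add, htm, htn]⟩
    · have hxy : y <+: x := by
        have h1 : y <+: x ++ y := h.symm ▸ List.prefix_append y x
        exact List.prefix_of_prefix_length_le h1 (List.prefix_append x y) hle
      obtain ⟨x₁, hx₁⟩ := hxy
      have hcomm : y ++ x₁ = x₁ ++ y := by
        have h' : y ++ (y ++ x₁) = (y ++ x₁) ++ y := by rw [hx₁]; exact h.symm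
        apply List.append_cancel_left (as := y)
        rw [h']; simp
      have hlen : y.length + x₁.length ≤ N := by
        have := congrArg List.length hx₁
        simp at this
        have hy1 : 1 ≤ y.length := by
          cases y with
          | nil => exact absurd rfl hy
          | cons a l => simp
        omega
      obtain ⟨t, m, n, htm, htn⟩ := ih y x₁ hcomm hlen
      exact ⟨t, m + n, m, by rw [← hx₁, wpow_add, htm, htn], htm⟩

lemma comm_common {x y : List A} (h : x ++ y = y ++ x) :
    ∃ t m n, x = wpow t m ∧ y = wpow t n :=
  comm_common_aux (x.length + y.length) x y h le_rfl

/-- If equal powers, the bases commute (asymmetric version). -/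
lemma comm_of_pow_eq_aux {x y : List A} {b c : ℕ} (hb : 1 ≤ b) (hc : 1 ≤ c)
    (h : wpow x b = wpow y c) (hle : x.length ≤ y.length) : x ++ y = y ++ x := by
  have hxw : x <+: wpow x b := by
    have : wpow x b = x ++ wpow x (b-1) := by
      rw [← wpow_succ]; congr 1; omega
    rw [this]; exact List.prefix_append x _
  have hyw : y <+: wpow x b := by
    rw [h]
    have : wpow y c = y ++ wpow y (c-1) := by
      rw [← wpow_succ]; congr 1; omega
    rw [this]; exact List.prefix_append y _
  obtain ⟨y₁, hy₁⟩ := List.prefix_of_prefix_length_le hxw hyw hle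
  -- y = x ++ y₁
  have key : wpow (y₁ ++ x) c = wpow (x ++ y₁) c := by
    apply List.append_cancel_left (as := x)
    rw [wpow_shuffle, hy₁, ← h, ← wpow_comm_self]
  have h2 : x ++ y₁ = y₁ ++ x := by
    apply eq_of_prefix_of_length (w := wpow (x ++ y₁) c)
    · have : wpow (x ++ y₁) c = (x ++ y₁) ++ wpow (x ++ y₁) (c-1) := by
        rw [← wpow_succ]; congr 1; omega
      rw [this]; exact List.prefix_append _ _
    · rw [← key]
      have : wpow (y₁ ++ x) c = (y₁ ++ x) ++ wpow (y₁ ++ x) (c-1) := by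
        rw [← wpow_succ]; congr 1; omega
      rw [this]; exact List.prefix_append _ _
    · simp [Nat.add_comm]
  calc x ++ y = x ++ (x ++ y₁) := by rw [hy₁]
    _ = x ++ (y₁ ++ x) := by rw [h2]
    _ = (x ++ y₁) ++ x := by rw [List.append_assoc]
    _ = y ++ x := by rw [hy₁]

lemma comm_of_pow_eq {x y : List A} {b c : ℕ} (hb : 1 ≤ b) (hc : 1 ≤ c)
    (h : wpow x b = wpow y c) : x ++ y = y ++ x := by
  rcases le_total x.length y.length with hle | hle
  · exact comm_of_pow_eq_aux hb hc h hle
  · exact (comm_of_pow_eq_aux hc hb h.symm hle).symm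

/-- Existence of a primitive root (fuel version). -/
lemma exists_prim_root_aux : ∀ (N : ℕ) (w : List A), w ≠ [] → w.length ≤ N →
    ∃ t n, Primitive t ∧ 1 ≤ n ∧ w = wpow t n := by
  intro N
  induction N with
  | zero =>
    intro w hw hl
    exact absurd (List.eq_nil_of_length_eq_zero (by omega)) hw
  | succ N ih =>
    intro w hw hl
    by_cases hP : ∃ u n, w = wpow u n ∧ n ≠ 1
    · obtain ⟨u, n, hun, hn⟩ := hP
      have hn0 : n ≠ 0 := by
        rintro rfl
        exact hw (by rw [hun, wpow_zero])
      have hu : u ≠ [] := by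
        rintro rfl
        exact hw (by rw [hun, wpow_nil])
      have hu1 : 1 ≤ u.length := List.length_pos_iff.mpr hu
      have hlu : u.length ≤ N := by
        have := congrArg List.length hun
        rw [length_wpow] at this
        have h2 : 2 ≤ n := by omega
        nlinarith
      obtain ⟨t, m, ht, hm, hwt⟩ := ih u hu hlu
      exact ⟨t, n * m, ht, by exact Nat.mul_pos (by omega) hm, by rw [hun, hwt, wpow_wpow]⟩
    · push_neg at hP
      refine ⟨w, 1, ⟨hw, fun u n hun => hP u n hun⟩, le_rfl, (wpow_one w).symm⟩

lemma exists_prim_root {w : List A} (hw : w ≠ []) :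
    ∃ t n, Primitive t ∧ 1 ≤ n ∧ w = wpow t n :=
  exists_prim_root_aux w.length w hw le_rfl

/-- A word commuting with a primitive word is a power of it. -/
lemma eq_pow_of_comm_prim {t x : List A} (ht : Primitive t) (h : x ++ t = t ++ x) :
    ∃ d, x = wpow t d := by
  obtain ⟨s, m, n, hxm, htn⟩ := comm_common h
  have hn1 : n = 1 := ht.2 s n htn
  rw [hn1, wpow_one] at htn
  exact ⟨m, by rw [hxm, htn]⟩

/-- A word commuting with a power of a primitive word is a power of that word. -/
lemma eq_pow_of_comm_pow {t x w : List A} (ht : Primitive t) {c : ℕ} (hc : 1 ≤ c)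
    (hw : w = wpow t c) (h : x ++ w = w ++ x) : ∃ d, x = wpow t d := by
  obtain ⟨s, p, q, hxp, hwq⟩ := comm_common h
  have htlen : 0 < t.length := List.length_pos_iff.mpr ht.1
  have hwne : w ≠ [] := by
    intro hnil
    have h0 := congrArg List.length hnil
    rw [hw, length_wpow] at h0
    simp at h0
    rcases h0 with h' | h'
    · omega
    · exact ht.1 h'
  have hq1 : 1 ≤ q := by
    rcases Nat.eq_zero_or_pos q with h0 | h1
    · exact absurd (by rw [hwq, h0, wpow_zero]) hwne
    · exact h1
  have hst : s ++ t = t ++ s := comm_of_pow_eq hq1 hc (by rw [← hwq, ← hw])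
  obtain ⟨d₀, hsd⟩ := eq_pow_of_comm_prim ht hst
  exact ⟨p * d₀, by rw [hxp, hsd, wpow_wpow]⟩

end Aux2

section Aux3
variable {A : Type*}

/-- Decomposition of a power along a rotation point. -/
lemma wpow_rot_decomp (v : List A) (r j : ℕ) (hr : r ≤ v.length) :
    wpow v (j+1) = v.take r ++ wpow (v.drop r ++ v.take r) j ++ v.drop r := by
  have h1 : v.take r ++ wpow (v.drop r ++ v.take r) j
      = wpow (v.take r ++ v.drop r) j ++ v.take r := wpow_shuffle _ _ j
  rw [List.take_append_drop] at h1
  calc wpow v (j+1) = wpow v j ++ v := by rw [wpow_add, wpow_one]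
    _ = wpow v j ++ (v.take r ++ v.drop r) := by rw [List.take_append_drop]
    _ = (wpow v j ++ v.take r) ++ v.drop r := by rw [List.append_assoc]
    _ = (v.take r ++ wpow (v.drop r ++ v.take r) j) ++ v.drop r := by rw [h1]

/-- Key segment lemma: a factor of `v^k` starting and ending at positions
congruent to `r` mod `|v|` is a power of the rotation of `v` by `r`. -/
lemma seg {v s m t : List A} {r a c k : ℕ} (hr : r < v.length)
    (heq : wpow v k = s ++ m ++ t)
    (hs : s.length = a * v.length + r) (hm : m.length = c * v.length) :
    m = wpow (v.drop r ++ v.take r) c := by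
  have hL1 : 1 ≤ v.length := by omega
  have hlen : k * v.length = s.length + m.length + t.length := by
    have h := congrArg List.length heq
    rw [length_wpow] at h
    simp [List.length_append] at h
    omega
  rcases Nat.eq_zero_or_pos r with hr0 | hr1
  · -- r = 0, rotation is v itself
    subst hr0
    have hveq : v.drop 0 ++ v.take 0 = v := by simp
    rw [hveq]
    have hak : a + c ≤ k := by
      have h1 : (a + c) * v.length ≤ k * v.length := by
        rw [Nat.add_mul]; omega
      exact Nat.le_of_mul_le_mul_right h1 (by omega)
    have hsa : s = wpow v a := by
      apply eq_of_prefix_of_length (w := wpow v k)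
      · exact ⟨m ++ t, by rw [← List.append_assoc]; exact heq.symm⟩
      · exact wpow_prefix v (by omega)
      · rw [length_wpow]; omega
    have hmt : m ++ t = wpow v (k - a) := by
      apply List.append_cancel_left (as := s)
      rw [← List.append_assoc, ← heq, hsa, ← wpow_add]
      congr 1; omega
    apply eq_of_prefix_of_length (w := wpow v (k - a))
    · exact ⟨t, hmt⟩
    · exact wpow_prefix v (by omega)
    · rw [length_wpow]; omega
  · -- r ≥ 1
    have hLv' : (v.drop r ++ v.take r).length = v.length := by
      rw [List.length_append, List.length_take, List.length_drop]
      omega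
    have hak : a + c + 1 ≤ k := by
      have h1 : (a + c) * v.length < k * v.length := by
        rw [Nat.add_mul]; omega
      have := Nat.lt_of_mul_lt_mul_right h1
      omega
    have hk1 : 1 ≤ k := by omega
    have hD : wpow v k
        = v.take r ++ wpow (v.drop r ++ v.take r) (k-1) ++ v.drop r := by
      have h2 := wpow_rot_decomp v r (k-1) (by omega)
      rw [show k - 1 + 1 = k by omega] at h2
      exact h2
    have hlt : (v.take r).length = r := by
      rw [List.length_take]; omega
    have hsa : s = v.take r ++ wpow (v.drop r ++ v.take r) a := by
      apply eq_of_prefix_of_length (w := wpow v k)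
      · exact ⟨m ++ t, by rw [← List.append_assoc]; exact heq.symm⟩
      · rw [hD]
        refine List.IsPrefix.trans ?_ ⟨v.drop r, rfl⟩
        exact (List.prefix_append_right_inj (v.take r)).mpr
          (wpow_prefix _ (by omega))
      · rw [List.length_append, hlt, length_wpow, hLv']; omega
    have hmt : m ++ t
        = wpow (v.drop r ++ v.take r) (k - 1 - a) ++ v.drop r := by
      apply List.append_cancel_left (as := s)
      rw [← List.append_assoc, ← heq, hD, hsa]
      rw [show k - 1 = a + (k - 1 - a) by omega, wpow_add]
      simp [List.append_assoc]
    apply eq_of_prefix_of_length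
      (w := wpow (v.drop r ++ v.take r) (k - 1 - a) ++ v.drop r)
    · exact ⟨t, hmt⟩
    · exact (wpow_prefix _ (show c ≤ k - 1 - a by omega)).trans ⟨v.drop r, rfl⟩
    · rw [length_wpow, hLv']; omega

/-- Conjugates of primitive words are primitive. -/
lemma prim_conj {x y : List A} (h : Primitive (x ++ y)) : Primitive (y ++ x) := by
  have hne : (y ++ x) ≠ [] := by
    intro h0
    rcases List.append_eq_nil_iff.mp h0 with ⟨hy, hx⟩
    exact h.1 (by rw [hx, hy]; rfl)
  refine ⟨hne, fun t n hyx => ?_⟩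
  rcases Nat.eq_zero_or_pos n with hn0 | hn1
  · exfalso; exact hne (by rw [hyx, hn0, wpow_zero])
  have ht : t ≠ [] := by
    rintro rfl
    exact hne (by rw [hyx, wpow_nil])
  have htL : 1 ≤ t.length := List.length_pos_iff.mpr ht
  have hr : y.length % t.length < t.length := Nat.mod_lt _ (by omega)
  have heq : wpow t (n + n) = y ++ (x ++ y) ++ x := by
    rw [wpow_add, ← hyx]
    simp [List.append_assoc]
  have hs : y.length = (y.length / t.length) * t.length + y.length % t.length := by
    rw [Nat.mul_comm]
    exact (Nat.div_add_mod _ _).symm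
  have hm : (x ++ y).length = n * t.length := by
    have h1 := congrArg List.length hyx
    rw [length_wpow] at h1
    simp at h1 ⊢
    omega
  have h2 := seg hr heq hs hm
  exact h.2 _ n h2

end Aux3

theorem stmt1 {A B : Type*} (ψ : B → List A)
    (hinj : Function.Injective (applyM ψ))
    (v : List A) (hv : Primitive v)
    (z : List B) (k : ℕ) (hk : 1 ≤ k)
    (hfac : applyM ψ z <:+: wpow v k)
    (ℓ : ℕ) (hℓ : 2 ≤ ℓ) (hlen : (ℓ + 1) * v.length ≤ z.length) :
    ∃ u : List B, Primitive u ∧ wpow u ℓ <:+: z ∧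
      ∃ r n, Primitive r ∧ applyM ψ u = wpow r n ∧ Conj r v := by
  obtain ⟨p, q, hpq⟩ := hfac
  have hL1 : 1 ≤ v.length := List.length_pos_iff.mpr hv.1
  -- pigeonhole on residues of positions mod |v|
  have hmaps : ∀ i ∈ Finset.range (z.length + 1),
      (p.length + (applyM ψ (z.take i)).length) % v.length
        ∈ Finset.range v.length := by
    intro i _
    exact Finset.mem_range.mpr (Nat.mod_lt _ (by omega))
  have hcard : (Finset.range v.length).card * (ℓ + 1)
      < (Finset.range (z.length + 1)).card := by
    rw [Finset.card_range, Finset.card_range]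
    calc v.length * (ℓ + 1) = (ℓ + 1) * v.length := Nat.mul_comm _ _
      _ ≤ z.length := hlen
      _ < z.length + 1 := Nat.lt_succ_self _
  obtain ⟨r', hr'mem, hfib⟩ :=
    Finset.exists_lt_card_fiber_of_mul_lt_card_of_maps_to hmaps hcard
  have hr'lt : r' < v.length := Finset.mem_range.mp hr'mem
  set F := (Finset.range (z.length + 1)).filter
    (fun i => (p.length + (applyM ψ (z.take i)).length) % v.length = r') with hF
  have hcard2 : ℓ + 2 ≤ F.card := hfib
  set E := F.orderEmbOfCardLe hcard2 with hE
  set e : ℕ → ℕ := fun j => E ⟨min j (ℓ+1), by omega⟩ with he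
  have hmemF : ∀ j : ℕ, e j ∈ F := fun j => Finset.orderEmbOfCardLe_mem F hcard2 _
  have he_le : ∀ j, e j ≤ z.length := by
    intro j
    have h1 := Finset.mem_range.mp (Finset.mem_filter.mp (hmemF j)).1
    omega
  have hres : ∀ j, (p.length + (applyM ψ (z.take (e j))).length) % v.length = r' :=
    fun j => (Finset.mem_filter.mp (hmemF j)).2
  have hmono : ∀ i j, i ≤ j → e i ≤ e j :=
    fun i j hij => E.le_iff_le.mpr (Fin.mk_le_mk.mpr (by omega))
  have hstrict : ∀ i j, i < j → j ≤ ℓ + 1 → e i < e j :=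
    fun i j hij hj => E.lt_iff_lt.mpr (Fin.mk_lt_mk.mpr (by omega))
  have hψnil : ∀ w : List B, applyM ψ w = [] → w = [] := by
    intro w hw
    exact hinj (by rw [hw]; rfl)
  -- the block lemma
  have hblock : ∀ j, j ≤ ℓ → ∃ c, 1 ≤ c ∧
      applyM ψ ((z.take (e (j+1))).drop (e j)) = wpow (v.drop r' ++ v.take r') c ∧
      z.take (e (j+1)) = z.take (e j) ++ (z.take (e (j+1))).drop (e j) ∧
      (z.take (e (j+1))).drop (e j) ≠ [] := by
    intro j hj
    have hab : e j < e (j+1) := hstrict j (j+1) (by omega) (by omega)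
    have hbz : e (j+1) ≤ z.length := he_le (j+1)
    have hsplit : z.take (e (j+1)) = z.take (e j) ++ (z.take (e (j+1))).drop (e j) := by
      conv_lhs => rw [← List.take_append_drop (e j) (z.take (e (j+1)))]
      congr 1
      rw [List.take_take]
      congr 1
      omega
    have hBlen : ((z.take (e (j+1))).drop (e j)).length = e (j+1) - e j := by
      rw [List.length_drop, List.length_take]
      omega
    have hBne : (z.take (e (j+1))).drop (e j) ≠ [] := by
      intro h0
      have := congrArg List.length h0
      rw [hBlen] at this
      simp at this
      omega
    have hz : z = (z.take (e j) ++ (z.take (e (j+1))).drop (e j)) ++ z.drop (e (j+1)) := by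
      rw [← hsplit, List.take_append_drop]
    have heq : wpow v k = (p ++ applyM ψ (z.take (e j)))
        ++ applyM ψ ((z.take (e (j+1))).drop (e j))
        ++ (applyM ψ (z.drop (e (j+1))) ++ q) := by
      rw [← hpq]
      conv_lhs => rw [hz]
      simp [applyM_append, List.append_assoc]
    have hψsplit : (applyM ψ (z.take (e (j+1)))).length
        = (applyM ψ (z.take (e j))).length
          + (applyM ψ ((z.take (e (j+1))).drop (e j))).length := by
      conv_lhs => rw [hsplit]
      rw [applyM_append, List.length_append]
    -- arithmetic on positions
    have e1 := Nat.div_add_mod (p.length + (applyM ψ (z.take (e j))).length) v.length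
    rw [hres j] at e1
    have e2 := Nat.div_add_mod (p.length + (applyM ψ (z.take (e (j+1)))).length) v.length
    rw [hres (j+1)] at e2
    have hdle : (p.length + (applyM ψ (z.take (e j))).length) / v.length
        ≤ (p.length + (applyM ψ (z.take (e (j+1)))).length) / v.length := by
      apply Nat.div_le_div_right
      omega
    set fa := p.length + (applyM ψ (z.take (e j))).length with hfa
    set fb := p.length + (applyM ψ (z.take (e (j+1)))).length with hfb
    have hclen : (applyM ψ ((z.take (e (j+1))).drop (e j))).length
        = (fb / v.length - fa / v.length) * v.length := by
      rw [Nat.sub_mul, Nat.mul_comm (fb / v.length) v.length,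
        Nat.mul_comm (fa / v.length) v.length]
      omega
    have hslen : (p ++ applyM ψ (z.take (e j))).length
        = (fa / v.length) * v.length + r' := by
      rw [List.length_append, Nat.mul_comm]
      omega
    have hc1 : 1 ≤ fb / v.length - fa / v.length := by
      by_contra h0
      push_neg at h0
      have h00 : fb / v.length - fa / v.length = 0 := by omega
      rw [h00] at hclen
      simp at hclen
      exact hBne (hψnil _ hclen)
    exact ⟨fb / v.length - fa / v.length, hc1, seg hr'lt heq hslen hclen, hsplit, hBne⟩
  -- primitive root of block 0
  obtain ⟨c0, hc01, hψB0, _, hB0ne⟩ := hblock 0 (by omega)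
  obtain ⟨t, n0, ht, hn0, hB0⟩ := exists_prim_root hB0ne
  -- every block is a power of t
  have hpow : ∀ j, j ≤ ℓ → ∃ nj, 1 ≤ nj ∧
      (z.take (e (j+1))).drop (e j) = wpow t nj := by
    intro j hj
    obtain ⟨cj, hcj1, hψBj, _, hBjne⟩ := hblock j hj
    have hcomm : (z.take (e (j+1))).drop (e j) ++ (z.take (e 1)).drop (e 0)
        = (z.take (e 1)).drop (e 0) ++ (z.take (e (j+1))).drop (e j) := by
      apply hinj
      rw [applyM_append, applyM_append, hψBj, hψB0, ← wpow_add, ← wpow_add,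
        Nat.add_comm]
    have hcomm' : (z.take (e (j+1))).drop (e j) ++ wpow t n0
        = wpow t n0 ++ (z.take (e (j+1))).drop (e j) := by
      rw [← hB0]; exact hcomm
    obtain ⟨d, hd⟩ := eq_pow_of_comm_pow ht hn0 rfl hcomm'
    refine ⟨d, ?_, hd⟩
    rcases Nat.eq_zero_or_pos d with h0 | h1
    · exact absurd (by rw [hd, h0, wpow_zero]) hBjne
    · exact h1
  -- concatenating blocks
  have hconcat : ∀ j, j ≤ ℓ + 1 → ∃ N, j ≤ N ∧
      (z.take (e j)).drop (e 0) = wpow t N := by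
    intro j
    induction j with
    | zero =>
      intro _
      refine ⟨0, le_rfl, ?_⟩
      rw [wpow_zero]
      apply List.drop_eq_nil_of_le
      exact List.length_take_le _ _
    | succ j ihj =>
      intro hj
      obtain ⟨N, hN, hNeq⟩ := ihj (by omega)
      obtain ⟨nj, hnj1, hBj⟩ := hpow j (by omega)
      obtain ⟨cj, _, _, hsplit, _⟩ := hblock j (by omega)
      have hstep : (z.take (e (j+1))).drop (e 0)
          = (z.take (e j)).drop (e 0) ++ (z.take (e (j+1))).drop (e j) := by
        conv_lhs => rw [hsplit]
        rw [List.drop_append]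
        have h1 : (z.take (e j)).length = e j := by
          rw [List.length_take]
          have := he_le j
          omega
        have h2 : e 0 ≤ e j := hmono 0 j (by omega)
        rw [show e 0 - (z.take (e j)).length = 0 by omega, List.drop_zero]
      exact ⟨N + nj, by omega, by rw [hstep, hNeq, hBj, ← wpow_add]⟩
  obtain ⟨N, hNl, hNeq⟩ := hconcat (ℓ+1) le_rfl
  -- assemble the answer
  have hv' : Primitive (v.drop r' ++ v.take r') := by
    apply prim_conj (x := v.take r') (y := v.drop r')
    rw [List.take_append_drop]
    exact hv
  have hψt : ∃ d, applyM ψ t = wpow (v.drop r' ++ v.take r') d := by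
    have h1 : wpow (applyM ψ t) n0 = wpow (v.drop r' ++ v.take r') c0 := by
      rw [← applyM_wpow, ← hB0, hψB0]
    have h2 := comm_of_pow_eq hn0 hc01 h1
    exact eq_pow_of_comm_prim hv' h2
  obtain ⟨d, htd⟩ := hψt
  refine ⟨t, ht, ?_, v.drop r' ++ v.take r', d, hv', htd,
    ⟨v.drop r', v.take r', rfl, (List.take_append_drop r' v).symm⟩⟩
  -- wpow t ℓ is a factor of z
  have hz1 : z.take (e (ℓ+1)) = z.take (e 0) ++ wpow t N := by
    rw [← hNeq]
    conv_lhs => rw [← List.take_append_drop (e 0) (z.take (e (ℓ+1)))]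
    congr 1
    rw [List.take_take]
    congr 1
    have := hmono 0 (ℓ+1) (by omega)
    omega
  have hNsplit : wpow t N = wpow t ℓ ++ wpow t (N - ℓ) := by
    rw [← wpow_add]
    congr 1
    omega
  refine ⟨z.take (e 0), wpow t (N - ℓ) ++ z.drop (e (ℓ+1)), ?_⟩
  conv_rhs => rw [← List.take_append_drop (e (ℓ+1)) z]
  rw [hz1, hNsplit]
  simp [List.append_assoc]
end

section
/- Let S = (A, φ, W) be a DF0L system and suppose the pair (v₁, v₂) is weakly synchronizing in S. If u₁ ends with v₁ (i.e., u₁ ∈ A*v₁), u₂ begins with v₂ (i.e., u₂ ∈ v₂A*), and u₁u₂ ∈ L(S), then (u₁, u₂) is weakly synchronizing in S. -/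
theorem stmt7 {A : Type*} (f : A → List A)
    (W : Set (List A)) (hWfin : W.Finite) (hWne : W.Nonempty)
    (hax : ∀ w ∈ W, w ≠ [])
    (v₁ v₂ u₁ u₂ : List A)
    (hsync : WeakSync (applyM f) (LangG (applyM f) W) v₁ v₂)
    (h1 : v₁ <:+ u₁) (h2 : v₂ <+: u₂)
    (hmem : u₁ ++ u₂ ∈ LangG (applyM f) W) :
    WeakSync (applyM f) (LangG (applyM f) W) u₁ u₂ := by
  rintro s w t ⟨hw, hgw⟩
  obtain ⟨x, hx⟩ := h1
  obtain ⟨y, hy⟩ := h2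
  have hi : Interp (applyM f) (LangG (applyM f) W) (s ++ x) w (y ++ t) (v₁ ++ v₂) := by
    refine ⟨hw, ?_⟩
    subst hx hy
    simpa [List.append_assoc] using hgw
  obtain ⟨w₁, w₂, hsplit, h1', h2'⟩ := hsync _ _ _ hi
  exact ⟨w₁, w₂, hsplit, by subst hx; simpa [List.append_assoc] using h1',
    by subst hy; simpa [List.append_assoc] using h2'⟩
end

section
/- Let S = (A, φ, W) be a DF0L system and suppose the pair (v₁, v₂) is strongly synchronizing in S. If u₁ ∈ A*v₁, u₂ ∈ v₂A*, and u₁u₂ ∈ L(S), then (u₁, u₂) is strongly synchronizing in S. -/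
theorem stmt8 {A : Type*} (f : A → List A)
    (W : Set (List A)) (hWfin : W.Finite) (hWne : W.Nonempty)
    (hax : ∀ w ∈ W, w ≠ [])
    (v₁ v₂ u₁ u₂ : List A)
    (hsync : StrongSync (applyM f) (LangG (applyM f) W) v₁ v₂)
    (h1 : v₁ <:+ u₁) (h2 : v₂ <+: u₂)
    (hmem : u₁ ++ u₂ ∈ LangG (applyM f) W) :
    StrongSync (applyM f) (LangG (applyM f) W) u₁ u₂ := by
  obtain ⟨hv₁ne, a, ha⟩ := hsync
  obtain ⟨p, hp⟩ := h1
  obtain ⟨q, hq⟩ := h2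
  refine ⟨?_, a, ?_⟩
  · intro h
    rw [h] at hp
    exact hv₁ne (List.append_eq_nil_iff.mp hp).2
  · rintro s w t ⟨hw, hgw⟩
    obtain ⟨w₁, w₂, hww, hg1, hg2, hlast⟩ :=
      ha (s ++ p) w (q ++ t) ⟨hw, by rw [hgw, ← hp, ← hq]; simp⟩
    exact ⟨w₁, w₂, hww, by rw [hg1, ← hp]; simp, by rw [hg2, ← hq]; simp, hlast⟩
end

section
/- Let S = (A, φ, W) be a PDF0L system (φ non-erasing), k ≥ 1, and S^k = (A, φ^k, {φ^i(w) : w ∈ W, 0 ≤ i < k}). If u ∈ L(S) satisfies |u| > ⌈φ⌉ · max{|φ^{k−2}(x)| : x ∈ W} and u is weakly synchronized in S^k, then u is weakly synchronized in S. -/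
section Helpers

variable {A : Type*}

lemma applyM_app {B : Type*} (f : A → List B) (x y : List A) :
    applyM f (x ++ y) = applyM f x ++ applyM f y := by
  simp [applyM]

lemma applyM_cons {B : Type*} (f : A → List B) (a : A) (w : List A) :
    applyM f (a :: w) = f a ++ applyM f w := by
  simp [applyM]

lemma iterM_app (f : A → List A) (n : ℕ) (x y : List A) :
    (applyM f)^[n] (x ++ y) = (applyM f)^[n] x ++ (applyM f)^[n] y := by
  induction n generalizing x y with
  | zero => simp
  | succ n ih => rw [Function.iterate_succ_apply, Function.iterate_succ_apply,
      Function.iterate_succ_apply, applyM_app, ih]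

lemma applyM_len_le {B : Type*} (f : A → List B) (K : ℕ) (h : ∀ c, (f c).length ≤ K)
    (w : List A) : (applyM f w).length ≤ K * w.length := by
  induction w with
  | nil => simp [applyM]
  | cons a w ih =>
    rw [applyM_cons, List.length_append, List.length_cons, Nat.mul_succ]
    have := h a
    omega

lemma le_applyM_len (f : A → List A) (hne : ∀ c, f c ≠ []) (w : List A) :
    w.length ≤ (applyM f w).length := by
  induction w with
  | nil => simp
  | cons a w ih =>
    rw [applyM_cons, List.length_append, List.length_cons]
    have : 0 < (f a).length := List.length_pos_iff.2 (hne a)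
    omega

lemma iterM_len_mono (f : A → List A) (hne : ∀ c, f c ≠ []) {i j : ℕ} (hij : i ≤ j)
    (w : List A) : ((applyM f)^[i] w).length ≤ ((applyM f)^[j] w).length := by
  obtain ⟨d, rfl⟩ := Nat.exists_eq_add_of_le hij
  clear hij
  rw [Nat.add_comm, Function.iterate_add_apply]
  induction d with
  | zero => simp
  | succ d ih =>
    rw [Function.iterate_succ_apply']
    exact le_trans ih (le_applyM_len f hne _)

lemma applyM_prefix {B : Type*} (f : A → List B) {x y : List A} (h : x <+: y) :
    applyM f x <+: applyM f y := by
  obtain ⟨z, rfl⟩ := h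
  rw [applyM_app]; exact List.prefix_append _ _

lemma applyM_suffix {B : Type*} (f : A → List B) {x y : List A} (h : x <:+ y) :
    applyM f x <:+ applyM f y := by
  obtain ⟨z, rfl⟩ := h
  rw [applyM_app]; exact List.suffix_append _ _

end Helpers
theorem stmt11 {A : Type*} [Fintype A] (f : A → List A)
    (hne : ∀ c, f c ≠ [])
    (W : Finset (List A)) (hWne : W.Nonempty) (hax : ∀ w ∈ W, w ≠ [])
    (k : ℕ) (hk : 1 ≤ k)
    (u : List A)
    (hu : u ∈ LangG (applyM f) ↑W)
    (hlen : (Finset.univ.sup fun c : A => (f c).length) *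
        (W.sup fun x => ((applyM f)^[k - 2] x).length) < u.length)
    (hsync : WeaklySynchronized ((applyM f)^[k])
      (LangG ((applyM f)^[k]) {x | ∃ w ∈ W, ∃ i < k, x = (applyM f)^[i] w}) u) :
    WeaklySynchronized (applyM f) (LangG (applyM f) ↑W) u := by
  classical
  obtain ⟨u₁, u₂, rfl, hws⟩ := hsync
  refine ⟨u₁, u₂, rfl, ?_⟩
  rintro s w t ⟨hwL, hgw⟩
  obtain ⟨n, a, haW, p, q, hpq⟩ := hwL
  by_cases hcase : n < k - 1
  · -- length contradiction
    exfalso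
    have hKc : ∀ c, (f c).length ≤ Finset.univ.sup fun c : A => (f c).length :=
      fun c => Finset.le_sup (f := fun c : A => (f c).length) (Finset.mem_univ c)
    have h1 : (u₁ ++ u₂).length ≤ (applyM f w).length := by
      rw [hgw]; simp only [List.length_append]; omega
    have h2 : (applyM f w).length ≤
        (Finset.univ.sup fun c : A => (f c).length) * w.length :=
      applyM_len_le f _ hKc w
    have h3 : w.length ≤ ((applyM f)^[n] a).length := by
      calc w.length ≤ (p ++ w ++ q).length := by simp only [List.length_append]; omega
        _ = ((applyM f)^[n] a).length := by rw [hpq]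
    have h4 : ((applyM f)^[n] a).length ≤ ((applyM f)^[k - 2] a).length :=
      iterM_len_mono f hne (by omega) a
    have h5 : ((applyM f)^[k - 2] a).length ≤
        W.sup fun x => ((applyM f)^[k - 2] x).length :=
      Finset.le_sup (f := fun x => ((applyM f)^[k - 2] x).length) haW
    have h6 := Nat.mul_le_mul_left (Finset.univ.sup fun c : A => (f c).length)
      (le_trans h3 (le_trans h4 h5))
    omega
  · push_neg at hcase
    set m₀ := n - (k - 1) with hm₀
    have hk1 : k - 1 + 1 = k := by omega
    set v' := (applyM f)^[m₀] a with hv'def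
    have hkm1 : (applyM f)^[k - 1] v' = p ++ w ++ q := by
      rw [hv'def, ← Function.iterate_add_apply]
      have hn : k - 1 + m₀ = n := by omega
      rw [hn, hpq]
    have hgkv' : (applyM f)^[k] v' =
        applyM f p ++ (s ++ (u₁ ++ u₂) ++ t) ++ applyM f q := by
      rw [← hk1, Function.iterate_succ_apply', hkm1, applyM_app, applyM_app, hgw]
    have hv'mem : v' ∈ LangG ((applyM f)^[k])
        {x | ∃ w ∈ W, ∃ i < k, x = (applyM f)^[i] w} := by
      refine ⟨m₀ / k, (applyM f)^[m₀ % k] a, ⟨a, haW, m₀ % k, Nat.mod_lt _ (by omega), rfl⟩, ?_⟩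
      have hvv : ((applyM f)^[k])^[m₀ / k] ((applyM f)^[m₀ % k] a) = v' := by
        rw [hv'def, ← Function.iterate_mul, ← Function.iterate_add_apply,
          Nat.div_add_mod]
      rw [hvv]
    obtain ⟨v₁, v₂, hv12, hgv1, hgv2⟩ :=
      hws (applyM f p ++ s) v' (t ++ applyM f q)
        ⟨hv'mem, by rw [hgkv']; simp [List.append_assoc]⟩
    set P := (applyM f)^[k - 1] v₁ with hP
    set Q := (applyM f)^[k - 1] v₂ with hQ
    have hPQ : P ++ Q = p ++ w ++ q := by
      rw [hP, hQ, ← iterM_app, ← hv12, hkm1]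
    have hstep : ∀ v : List A, applyM f ((applyM f)^[k - 1] v) = (applyM f)^[k] v := by
      intro v
      conv_rhs => rw [← hk1]
      rw [Function.iterate_succ_apply']
    have hgP : applyM f P = (applyM f p ++ s) ++ u₁ := by
      rw [hP, hstep, hgv1]
    have hgQ : applyM f Q = u₂ ++ (t ++ applyM f q) := by
      rw [hQ, hstep, hgv2]
    have hlenPQ : P.length + Q.length = p.length + w.length + q.length := by
      have := congrArg List.length hPQ
      simp only [List.length_append] at this
      omega
    rcases lt_or_ge P.length p.length with hPp | hPp
    · -- P proper prefix of p: forces s = [] and u₁ = []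
      have hPpre : P <+: p := by
        exact List.prefix_of_prefix_length_le ⟨Q, hPQ⟩ ⟨w ++ q, by simp⟩ (le_of_lt hPp)
      have hlenle : (applyM f P).length ≤ (applyM f p).length :=
        (applyM_prefix f hPpre).length_le
      rw [hgP] at hlenle
      simp only [List.length_append] at hlenle
      have hs : s = [] := List.eq_nil_of_length_eq_zero (by omega)
      have hu1 : u₁ = [] := List.eq_nil_of_length_eq_zero (by omega)
      refine ⟨[], w, by simp, by simp [hs, hu1, applyM], ?_⟩
      rw [hgw, hs, hu1]; simp
    rcases lt_or_ge Q.length q.length with hQq | hQq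
    · -- Q proper suffix of q: forces u₂ = [] and t = []
      have hQsuf : Q <:+ q :=
        List.suffix_of_suffix_length_le ⟨P, hPQ⟩ ⟨p ++ w, by simp⟩ (le_of_lt hQq)
      have hlenle : (applyM f Q).length ≤ (applyM f q).length :=
        (applyM_suffix f hQsuf).length_le
      rw [hgQ] at hlenle
      simp only [List.length_append] at hlenle
      have hu2 : u₂ = [] := List.eq_nil_of_length_eq_zero (by omega)
      have ht : t = [] := List.eq_nil_of_length_eq_zero (by omega)
      refine ⟨w, [], by simp, ?_, by simp [hu2, ht, applyM]⟩
      rw [hgw, hu2, ht]; simp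
    · -- the split point falls inside w
      set j := P.length - p.length with hj
      have hjw : j ≤ w.length := by omega
      set w₁ := w.take j with hw₁
      set w₂ := w.drop j with hw₂
      have hwsplit : w = w₁ ++ w₂ := (List.take_append_drop j w).symm
      have hsplit : P ++ Q = (p ++ w₁) ++ (w₂ ++ q) := by
        rw [hPQ, hw₁, hw₂]
        simp only [List.append_assoc]
        rw [← List.append_assoc (List.take j w), List.take_append_drop]
      have hlw₁ : w₁.length = j := by
        rw [hw₁, List.length_take]; omega
      have hPeq : P = p ++ w₁ ∧ Q = w₂ ++ q :=
        List.append_inj hsplit (by rw [List.length_append, hlw₁]; omega)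
      refine ⟨w₁, w₂, hwsplit, ?_, ?_⟩
      · have h1 : applyM f (p ++ w₁) = (applyM f p ++ s) ++ u₁ := by rw [← hPeq.1, hgP]
        rw [applyM_app] at h1
        have h2 : applyM f p ++ applyM f w₁ = applyM f p ++ (s ++ u₁) := by
          rw [h1]; simp [List.append_assoc]
        exact List.append_cancel_left h2
      · have h1 : applyM f (w₂ ++ q) = u₂ ++ (t ++ applyM f q) := by rw [← hPeq.2, hgQ]
        rw [applyM_app] at h1
        have h2 : applyM f w₂ ++ applyM f q = (u₂ ++ t) ++ applyM f q := by
          rw [h1]; simp [List.append_assoc]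
        exact List.append_cancel_right h2
end
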